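/- For every ε > 0 there exists N such that for all n ≥ N, every (full-rank) lattice L ⊂ ℝ^n, every β ≥ 0 with N_α(L*) ≤ 2^{βn}·α^n for all α ≥ 1, and every s ≥ (2^{β}/√(2πe) + ε)·√n/λ1(L*), one has ρ_{1/s}(L*) < 3/2. -/

import Mathlib

open scoped BigOperators RealInnerProductSpace

noncomputable section

/-- Euclidean space ℝⁿ. -/
abbrev Euc (n : ℕ) := EuclideanSpace ℝ (Fin n)

/-- `IsLattice L` : `L ⊂ ℝⁿ` is a (full-rank) lattice, i.e. the set of integer linear
combinations of some ℝ-basis of ℝⁿ. -/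
def IsLattice {n : ℕ} (L : Set (Euc n)) : Prop :=
  ∃ b : Module.Basis (Fin n) ℝ (Euc n),
    L = {x | ∃ z : Fin n → ℤ, x = ∑ i, (z i : ℝ) • b i}

/-- The dual lattice `L* = {w : ⟨w, y⟩ ∈ ℤ for all y ∈ L}`. -/
def dualLattice {n : ℕ} (L : Set (Euc n)) : Set (Euc n) :=
  {w | ∀ y ∈ L, ∃ k : ℤ, ⟪w, y⟫ = (k : ℝ)}

/-- `λ₁(L)` : the length of a shortest nonzero lattice vector. -/
def lambda1 {n : ℕ} (L : Set (Euc n)) : ℝ :=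
  sInf {r : ℝ | ∃ y ∈ L, y ≠ 0 ∧ ‖y‖ = r}

/-- `μ(L)` : the covering radius `sup_t inf_{y ∈ L} ‖y - t‖`. -/
def covRadius {n : ℕ} (L : Set (Euc n)) : ℝ :=
  ⨆ t : Euc n, ⨅ y : L, ‖(y : Euc n) - t‖

/-- `ρ_s(L - t)` : the Gaussian mass `∑_{y ∈ L} exp(-π‖y - t‖²/s²)`. -/
def gaussMass {n : ℕ} (s : ℝ) (L : Set (Euc n)) (t : Euc n) : ℝ :=
  ∑' y : L, Real.exp (-(Real.pi * ‖(y : Euc n) - t‖ ^ 2 / s ^ 2))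

/-- `ρ_{s,r}(L - t)` : the truncated Gaussian mass
`∑_{y ∈ L, ‖y - t‖ ≥ r} exp(-π‖y - t‖²/s²)`. -/
def truncGaussMass {n : ℕ} (s r : ℝ) (L : Set (Euc n)) (t : Euc n) : ℝ :=
  ∑' y : {v : Euc n // v ∈ L ∧ r ≤ ‖v - t‖},
    Real.exp (-(Real.pi * ‖(y : Euc n) - t‖ ^ 2 / s ^ 2))

/-- `N_α(L)` : the number of nonzero lattice points in the closed ball of radius `α·λ₁(L)`. -/
def latticePointCount {n : ℕ} (α : ℝ) (L : Set (Euc n)) : ℕ :=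
  Set.ncard {y ∈ L | y ≠ 0 ∧ ‖y‖ ≤ α * lambda1 L}


open scoped ENNReal

set_option maxHeartbeats 1000000

section Aux

variable {n : ℕ}

lemma basis_mem_latt (b : Module.Basis (Fin n) ℝ (Euc n)) (i : Fin n) :
    b i ∈ {x : Euc n | ∃ z : Fin n → ℤ, x = ∑ j, (z j : ℝ) • b j} := by
  refine ⟨fun j => if j = i then 1 else 0, ?_⟩
  rw [Finset.sum_eq_single i]
  · simp
  · intro j _ hj; simp [hj]
  · intro h; exact absurd (Finset.mem_univ i) h

lemma mem_dual_iff (b : Module.Basis (Fin n) ℝ (Euc n)) (w : Euc n) :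
    (∀ y ∈ {x : Euc n | ∃ z : Fin n → ℤ, x = ∑ j, (z j : ℝ) • b j}, ∃ k : ℤ, ⟪w, y⟫ = (k : ℝ))
    ↔ ∀ i, ∃ k : ℤ, ⟪w, b i⟫ = (k : ℝ) := by
  constructor
  · intro h i
    exact h (b i) (basis_mem_latt b i)
  · intro h y hy
    obtain ⟨z, rfl⟩ := hy
    choose k hk using h
    refine ⟨∑ i, z i * k i, ?_⟩
    rw [inner_sum]
    push_cast
    refine Finset.sum_congr rfl fun i _ => ?_
    rw [real_inner_smul_right, hk i]

lemma eq_of_inner_basis_eq (b : Module.Basis (Fin n) ℝ (Euc n)) {y y' : Euc n}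
    (h : ∀ i, ⟪y, b i⟫ = ⟪y', b i⟫) : y = y' := by
  have hx : ∀ i, ⟪y - y', b i⟫ = (0:ℝ) := by
    intro i; rw [inner_sub_left, h i, sub_self]
  have hrepr := (b.sum_repr (y - y'))
  have : ⟪y - y', y - y'⟫ = (0:ℝ) := by
    nth_rewrite 2 [← hrepr]
    rw [inner_sum]
    refine Finset.sum_eq_zero fun i _ => ?_
    rw [real_inner_smul_right, hx i, mul_zero]
  have := inner_self_eq_zero.mp this
  exact sub_eq_zero.mp this

lemma integer_ball_finite (b : Module.Basis (Fin n) ℝ (Euc n)) (R : ℝ) :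
    Set.Finite {y : Euc n | (∀ i, ∃ k : ℤ, ⟪y, b i⟫ = (k:ℝ)) ∧ ‖y‖ ≤ R} := by
  classical
  set S : ℝ := ∑ i, ‖b i‖ with hS
  set C : ℤ := ⌈R * S⌉ with hC
  set K : Euc n → (Fin n → ℤ) :=
    fun y i => if h : ∃ k : ℤ, ⟪y, b i⟫ = (k:ℝ) then h.choose else 0 with hK
  have hKspec : ∀ y : Euc n, (∀ i, ∃ k : ℤ, ⟪y, b i⟫ = (k:ℝ)) →
      ∀ i, ((K y i : ℤ) : ℝ) = ⟪y, b i⟫ := by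
    intro y hy i
    simp only [hK, dif_pos (hy i)]
    exact ((hy i).choose_spec).symm
  apply Set.Finite.of_finite_image (f := K)
  · apply Set.Finite.subset (Set.Finite.pi (fun i : Fin n => Set.finite_Icc (-C) C))
    rintro g ⟨y, ⟨hy, hyR⟩, rfl⟩
    intro i _
    have hR0 : 0 ≤ R := le_trans (norm_nonneg y) hyR
    have h1 : |⟪y, b i⟫| ≤ R * S := by
      refine le_trans (abs_real_inner_le_norm y (b i)) ?_
      have hbS : ‖b i‖ ≤ S :=
        Finset.single_le_sum (fun j _ => norm_nonneg (b j)) (Finset.mem_univ i)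
      exact mul_le_mul hyR hbS (norm_nonneg _) hR0
    have h2 : |((K y i : ℤ) : ℝ)| ≤ (C : ℝ) := by
      rw [hKspec y hy i]
      exact le_trans h1 (Int.le_ceil _)
    rw [← Int.cast_abs] at h2
    have h3 : |K y i| ≤ C := by exact_mod_cast h2
    simp only [Set.mem_Icc]
    exact abs_le.mp h3
  · intro y hy y' hy' hKeq
    apply eq_of_inner_basis_eq b
    intro i
    rw [← hKspec y hy.1 i, ← hKspec y' hy'.1 i, hKeq]

lemma exists_dual_nonzero (hn : 0 < n) (b : Module.Basis (Fin n) ℝ (Euc n)) :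
    ∃ m : Euc n, (∀ i, ∃ k : ℤ, ⟪m, b i⟫ = (k:ℝ)) ∧ m ≠ 0 := by
  classical
  set i0 : Fin n := ⟨0, hn⟩
  set F : Euc n →L[ℝ] ℝ := LinearMap.toContinuousLinearMap (b.coord i0)
  set m : Euc n := (InnerProductSpace.toDual ℝ (Euc n)).symm F with hm
  have hmb : ∀ i, ⟪m, b i⟫ = if i = i0 then (1:ℝ) else 0 := by
    intro i
    rw [hm, InnerProductSpace.toDual_symm_apply]
    show b.coord i0 (b i) = _
    rw [Module.Basis.coord_apply, Module.Basis.repr_self, Finsupp.single_apply]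
  refine ⟨m, fun i => ⟨if i = i0 then 1 else 0, by rw [hmb i]; split <;> simp⟩, ?_⟩
  intro h0
  have := hmb i0
  rw [h0] at this
  simp at this

lemma dual_facts {n : ℕ} (hn : 0 < n) {L : Set (Euc n)} (hL : IsLattice L) :
    (∀ R : ℝ, Set.Finite {y | y ∈ dualLattice L ∧ ‖y‖ ≤ R}) ∧
    ∃ m : Euc n, m ∈ dualLattice L ∧ m ≠ 0 ∧ lambda1 (dualLattice L) = ‖m‖ ∧
      ∀ y ∈ dualLattice L, y ≠ 0 → ‖m‖ ≤ ‖y‖ := by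
  obtain ⟨b, hLb⟩ := hL
  have hdual : ∀ w : Euc n, w ∈ dualLattice L ↔ ∀ i, ∃ k : ℤ, ⟪w, b i⟫ = (k:ℝ) := by
    intro w
    rw [show (w ∈ dualLattice L ↔ ∀ y ∈ L, ∃ k : ℤ, ⟪w, y⟫ = (k:ℝ)) from Iff.rfl, hLb]
    exact mem_dual_iff b w
  have hfin : ∀ R : ℝ, Set.Finite {y | y ∈ dualLattice L ∧ ‖y‖ ≤ R} := by
    intro R
    refine Set.Finite.subset (integer_ball_finite b R) ?_
    rintro y ⟨hy, hyR⟩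
    exact ⟨(hdual y).mp hy, hyR⟩
  refine ⟨hfin, ?_⟩
  obtain ⟨d0, hd0, hd0ne⟩ := exists_dual_nonzero hn b
  have hd0mem : d0 ∈ dualLattice L := (hdual d0).mpr hd0
  set F : Set (Euc n) := {y | (y ∈ dualLattice L ∧ y ≠ 0) ∧ ‖y‖ ≤ ‖d0‖} with hF
  have hFfin : F.Finite := by
    refine Set.Finite.subset (hfin ‖d0‖) ?_
    rintro y ⟨⟨h1, _⟩, h3⟩; exact ⟨h1, h3⟩
  have hFne : F.Nonempty := ⟨d0, ⟨hd0mem, hd0ne⟩, le_refl _⟩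
  obtain ⟨m, hmF, hmmin⟩ := Set.exists_min_image F (fun y => ‖y‖) hFfin hFne
  obtain ⟨⟨hmmem, hmne⟩, hmd0⟩ := hmF
  have hglobal : ∀ y ∈ dualLattice L, y ≠ 0 → ‖m‖ ≤ ‖y‖ := by
    intro y hy hyne
    by_cases hc : ‖y‖ ≤ ‖d0‖
    · exact hmmin y ⟨⟨hy, hyne⟩, hc⟩
    · exact le_trans hmd0 (le_of_not_ge hc)
  refine ⟨m, hmmem, hmne, ?_, hglobal⟩
  apply le_antisymm
  · exact csInf_le ⟨0, by rintro r ⟨y, _, _, rfl⟩; exact norm_nonneg y⟩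
      ⟨m, hmmem, hmne, rfl⟩
  · refine le_csInf ⟨‖m‖, m, hmmem, hmne, rfl⟩ ?_
    rintro r ⟨y, hy, hyne, rfl⟩
    exact hglobal y hy hyne

lemma le_exp_sub_one (u : ℝ) : u ≤ Real.exp (u - 1) := by
  have := Real.add_one_le_exp (u - 1); linarith

lemma exp_sq (v : ℝ) : (Real.exp v)^2 = Real.exp (2*v) := by
  rw [sq, ← Real.exp_add]; ring_nf

lemma key_bound (ε β x : ℝ) (hε : 0 < ε) (hε1 : ε ≤ 1) (hβ : 0 ≤ β) (hx : 1 ≤ x) :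
    (2:ℝ)^β * x *
      Real.exp (-(Real.pi * ((2:ℝ)^β / Real.sqrt (2*Real.pi*Real.exp 1) + ε/2)^2 * x^2))
      ≤ 1 - ε/4 := by
  have hpi : 3 < Real.pi := Real.pi_gt_three
  have hepos : (0:ℝ) < Real.exp 1 := Real.exp_pos 1
  have helt : Real.exp 1 < 3 := by
    have := Real.exp_one_lt_d9; linarith
  set w : ℝ := Real.sqrt (2*Real.pi*Real.exp 1) with hw
  have hw0 : 0 < w := Real.sqrt_pos.mpr (by positivity)
  have hw2 : w^2 = 2*Real.pi*Real.exp 1 := Real.sq_sqrt (by positivity)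
  have h2b0 : (0:ℝ) < (2:ℝ)^β := Real.rpow_pos_of_pos (by norm_num) β
  have h2b1 : (1:ℝ) ≤ (2:ℝ)^β := by
    have := Real.rpow_le_rpow_of_exponent_le (x := 2) (by norm_num) hβ
    simpa using this
  set B : ℝ := (2:ℝ)^β / w with hB
  have hB0 : 0 < B := div_pos h2b0 hw0
  have h2bw : (2:ℝ)^β = w * B := by rw [hB]; field_simp
  set D : ℝ := Real.pi * (B + ε/2)^2 with hD
  have hD0 : 0 < D := by positivity
  have hx0 : (0:ℝ) < x := lt_of_lt_of_le one_pos hx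
  have hx2 : 1 ≤ x^2 := by nlinarith
  have h2beπ : β * Real.log 2 ≤ Real.pi * B^2 := by
    have h1 : 2*(β*Real.log 2) ≤ Real.exp (2*(β*Real.log 2) - 1) := le_exp_sub_one _
    have h2 : ((2:ℝ)^β)^2 = Real.exp (2*(β*Real.log 2)) := by
      rw [Real.rpow_def_of_pos (by norm_num : (0:ℝ) < 2), exp_sq]
      ring_nf
    have h3 : Real.exp (2*(β*Real.log 2) - 1) = ((2:ℝ)^β)^2 / Real.exp 1 := by
      rw [Real.exp_sub, h2]
    rw [h3] at h1
    have h1' : 2*(β*Real.log 2) * Real.exp 1 ≤ ((2:ℝ)^β)^2 := by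
      rw [← le_div_iff₀ hepos]; exact h1
    have h4 : Real.pi * B^2 * (2*Real.exp 1) = ((2:ℝ)^β)^2 := by
      rw [h2bw]; nlinarith [hw2]
    nlinarith [h1', hepos]
  have hπw : 1/2 ≤ Real.pi / w := by
    have hsq : (Real.pi / w)^2 = Real.pi / (2*Real.exp 1) := by
      rw [div_pow, hw2]; rw [div_eq_div_iff (by positivity) (by positivity)]; ring
    have h14 : (1/4 : ℝ) ≤ (Real.pi/w)^2 := by
      rw [hsq, le_div_iff₀ (by positivity)]
      nlinarith
    nlinarith [div_pos Real.pi_pos hw0]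
  by_cases hDc : 1/2 ≤ D
  · -- peak at x = 1
    have hlogx : x ≤ Real.exp ((x^2-1)/2) := by
      have h1 : Real.log x ≤ x - 1 := Real.log_le_sub_one_of_pos hx0
      have h2 : x - 1 ≤ (x^2-1)/2 := by nlinarith [sq_nonneg (x-1)]
      calc x = Real.exp (Real.log x) := (Real.exp_log hx0).symm
      _ ≤ Real.exp ((x^2-1)/2) := Real.exp_le_exp.mpr (by linarith)
    have step1 : x * Real.exp (-(D*x^2)) ≤ Real.exp (-D) := by
      calc x * Real.exp (-(D*x^2)) ≤ Real.exp ((x^2-1)/2) * Real.exp (-(D*x^2)) :=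
            mul_le_mul_of_nonneg_right hlogx (Real.exp_pos _).le
      _ = Real.exp ((x^2-1)/2 - D*x^2) := by rw [← Real.exp_add]; ring_nf
      _ ≤ Real.exp (-D) := by
          apply Real.exp_le_exp.mpr
          nlinarith [mul_nonneg (sub_nonneg.mpr hx2) (sub_nonneg.mpr hDc)]
    have step2 : (2:ℝ)^β * Real.exp (-D) ≤ 1 - ε/4 := by
      have hBw : 1/w ≤ B := by
        rw [hB]; gcongr
      have h5 : 1/2 ≤ Real.pi * B := by
        calc (1:ℝ)/2 ≤ Real.pi / w := hπw
        _ = Real.pi * (1/w) := by ring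
        _ ≤ Real.pi * B := by nlinarith [Real.pi_pos]
      have hDlb : β * Real.log 2 + ε/2 ≤ D := by
        have hexp : Real.pi * B^2 + Real.pi * B * ε ≤ D := by
          rw [hD]; nlinarith [sq_nonneg ε, hB0.le, hε.le, Real.pi_pos]
        nlinarith [h2beπ, h5, hε]
      have hrw : (2:ℝ)^β * Real.exp (-D) = Real.exp (β * Real.log 2 - D) := by
        rw [Real.rpow_def_of_pos (by norm_num : (0:ℝ) < 2), ← Real.exp_add]
        ring_nf
      rw [hrw]
      have h6 : Real.exp (β * Real.log 2 - D) ≤ Real.exp (-(ε/2)) :=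
        Real.exp_le_exp.mpr (by linarith)
      have h7 : Real.exp (-(ε/2)) ≤ 1 - ε/4 := by
        have h8 : 1 + ε/2 ≤ Real.exp (ε/2) := by
          have := Real.add_one_le_exp (ε/2); linarith
        have h9 : Real.exp (-(ε/2)) * Real.exp (ε/2) = 1 := by
          rw [← Real.exp_add]; simp
        nlinarith [Real.exp_pos (ε/2), Real.exp_pos (-(ε/2))]
      linarith
    calc (2:ℝ)^β * x * Real.exp (-(D*x^2))
        = (2:ℝ)^β * (x * Real.exp (-(D*x^2))) := by ring
      _ ≤ (2:ℝ)^β * Real.exp (-D) := by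
          apply mul_le_mul_of_nonneg_left step1 h2b0.le
      _ ≤ 1 - ε/4 := step2
  · -- peak inside, use sup bound
    push_neg at hDc
    have hBhalf : B + ε/2 < 1/2 := by
      nlinarith [sq_nonneg (B + ε/2), hB0, hε, hDc]
    set a : ℝ := w * (B + ε/2) with ha
    have ha0 : 0 < a := by positivity
    have step1 : x * a ≤ Real.exp (D * x^2) := by
      have hv : 0 < D * x^2 := by positivity
      have h1 : 2*(D*x^2) ≤ Real.exp (2*(D*x^2) - 1) := le_exp_sub_one _
      have h2 : Real.exp (2*(D*x^2) - 1) = (Real.exp (D*x^2))^2 / Real.exp 1 := by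
        rw [Real.exp_sub, exp_sq]
      rw [h2] at h1
      have h1' : 2*(D*x^2) * Real.exp 1 ≤ (Real.exp (D*x^2))^2 := by
        rw [← le_div_iff₀ hepos]; exact h1
      have h3 : (x*a)^2 = 2*(D*x^2)*Real.exp 1 := by
        rw [ha, hD]; linear_combination (x^2*(B+ε/2)^2) * hw2
      nlinarith [Real.exp_pos (D*x^2), mul_nonneg hx0.le ha0.le, h1', h3]
    have step1' : x * Real.exp (-(D*x^2)) ≤ 1/a := by
      rw [Real.exp_neg]
      rw [← le_div_iff₀ ha0] at step1
      calc x * (Real.exp (D*x^2))⁻¹ ≤ (Real.exp (D*x^2) / a) * (Real.exp (D*x^2))⁻¹ :=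
            mul_le_mul_of_nonneg_right step1 (by positivity)
      _ = 1/a := by field_simp
    have step2 : (2:ℝ)^β * (1/a) ≤ 1 - ε/4 := by
      rw [h2bw, ha]
      have h3 : w * B * (1/(w * (B+ε/2))) = B / (B + ε/2) := by
        field_simp
      rw [h3]
      rw [div_le_iff₀ (by linarith)]
      nlinarith
    calc (2:ℝ)^β * x * Real.exp (-(D*x^2))
        = (2:ℝ)^β * (x * Real.exp (-(D*x^2))) := by ring
      _ ≤ (2:ℝ)^β * (1/a) := mul_le_mul_of_nonneg_left step1' h2b0.le
      _ ≤ 1 - ε/4 := step2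

lemma shell_coef_base (e β c : ℝ) (he0 : 0 < e) (he1 : e ≤ 1) (hβ : 0 ≤ β)
    (hcge : Real.pi * ((2:ℝ)^β / Real.sqrt (2*Real.pi*Real.exp 1) + e)^2 ≤ c) (j : ℕ) :
    (2:ℝ)^β * (1+e^2)^(j+1) * Real.exp (-(c * ((1+e^2)^j)^2))
      ≤ (1 - e/4) * (Real.exp (-(4*e^4)))^j := by
  have hpi : 3 < Real.pi := Real.pi_gt_three
  set w : ℝ := Real.sqrt (2*Real.pi*Real.exp 1) with hw
  have hw0 : 0 < w := Real.sqrt_pos.mpr (by positivity)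
  have h2b0 : (0:ℝ) < (2:ℝ)^β := Real.rpow_pos_of_pos (by norm_num) β
  set B : ℝ := (2:ℝ)^β / w with hB
  have hB0 : 0 < B := div_pos h2b0 hw0
  set r : ℝ := 1 + e^2 with hr
  have hr1 : 1 < r := by rw [hr]; nlinarith
  set x : ℝ := r^j with hx
  have hx1 : 1 ≤ x := one_le_pow₀ hr1.le
  have hQ0 : (0:ℝ) ≤ 1 - e/4 := by linarith
  have hkey := key_bound e β x he0 he1 hβ hx1
  rw [← hw, ← hB] at hkey
  have hgap : 2*e^2 ≤ c - Real.pi * (B + e/2)^2 := by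
    have h1 : Real.pi * (B+e)^2 - Real.pi*(B+e/2)^2 = Real.pi * (e*B + 3*e^2/4) := by ring
    have h2 : 3 * (3*e^2/4) ≤ Real.pi * (e*B + 3*e^2/4) := by
      nlinarith [mul_nonneg he0.le hB0.le]
    nlinarith [hcge]
  have hsplit : Real.exp (-(c * x^2))
      = Real.exp (-(Real.pi * (B+e/2)^2 * x^2)) *
        Real.exp (-((c - Real.pi*(B+e/2)^2) * x^2)) := by
    rw [← Real.exp_add]; ring_nf
  have hexp2 : Real.exp (-((c - Real.pi*(B+e/2)^2) * x^2)) ≤ Real.exp (-(2*e^2 * x^2)) := by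
    apply Real.exp_le_exp.mpr
    nlinarith [mul_le_mul_of_nonneg_right hgap (sq_nonneg x)]
  have hA : (2:ℝ)^β * x * Real.exp (-(c*x^2)) ≤ (1 - e/4) * Real.exp (-(2*e^2*x^2)) := by
    rw [hsplit, ← mul_assoc]
    exact mul_le_mul hkey hexp2 (Real.exp_pos _).le hQ0
  have hb : 1 + (2*e^2) * (j:ℝ) ≤ x^2 := by
    have h1 : x^2 = (1 + (2*e^2 + e^4))^j := by
      rw [hx, ← pow_mul, mul_comm j 2, pow_mul]
      congr 1
      rw [hr]; ring
    have h2 : 1 + (j:ℝ)*(2*e^2+e^4) ≤ (1 + (2*e^2 + e^4))^j :=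
      one_add_mul_le_pow (by nlinarith) j
    have h3 : 1 + (2*e^2) * (j:ℝ) ≤ 1 + (j:ℝ)*(2*e^2+e^4) := by
      nlinarith [Nat.cast_nonneg (α := ℝ) j, sq_nonneg (e^2)]
    rw [h1]
    exact le_trans h3 h2
  have hrQ : r * Real.exp (-(2*e^2 * x^2)) ≤ (Real.exp (-(4*e^4)))^j := by
    have h1 : Real.exp (-(2*e^2*x^2)) ≤ Real.exp (-(2*e^2) - (4*e^4)*(j:ℝ)) := by
      apply Real.exp_le_exp.mpr
      nlinarith [mul_le_mul_of_nonneg_left hb (by positivity : (0:ℝ) ≤ 2*e^2)]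
    have h2 : r ≤ Real.exp (e^2) := by
      have := Real.add_one_le_exp (e^2); rw [hr]; linarith
    have h4 : (Real.exp (-(4*e^4)))^j = Real.exp ((j:ℝ) * (-(4*e^4))) := by
      rw [← Real.exp_nat_mul]
    calc r * Real.exp (-(2*e^2*x^2))
        ≤ Real.exp (e^2) * Real.exp (-(2*e^2) - (4*e^4)*(j:ℝ)) :=
          mul_le_mul h2 h1 (Real.exp_pos _).le (Real.exp_pos _).le
      _ = Real.exp (e^2 - 2*e^2 - (4*e^4)*(j:ℝ)) := by rw [← Real.exp_add]; ring_nf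
      _ ≤ Real.exp ((j:ℝ) * (-(4*e^4))) := by
          apply Real.exp_le_exp.mpr
          nlinarith [sq_nonneg e]
      _ = (Real.exp (-(4*e^4)))^j := h4.symm
  calc (2:ℝ)^β * r^(j+1) * Real.exp (-(c * x^2))
      = r * ((2:ℝ)^β * x * Real.exp (-(c * x^2))) := by rw [hx, pow_succ]; ring
    _ ≤ r * ((1 - e/4) * Real.exp (-(2*e^2*x^2))) := by
        apply mul_le_mul_of_nonneg_left hA (by positivity)
    _ = (1 - e/4) * (r * Real.exp (-(2*e^2*x^2))) := by ring
    _ ≤ (1 - e/4) * (Real.exp (-(4*e^4)))^j := mul_le_mul_of_nonneg_left hrQ hQ0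

lemma shell_coef_pow (e β c : ℝ) (n : ℕ) (hn1 : 1 ≤ n)
    (he0 : 0 < e) (he1 : e ≤ 1) (hβ : 0 ≤ β)
    (hcge : Real.pi * ((2:ℝ)^β / Real.sqrt (2*Real.pi*Real.exp 1) + e)^2 ≤ c) (j : ℕ) :
    (2:ℝ)^(β*n) * ((1+e^2)^(j+1))^n * Real.exp (-(c * n * ((1+e^2)^j)^2))
      ≤ (1 - e/4)^n * (Real.exp (-(4*e^4)))^j := by
  have hbase := shell_coef_base e β c he0 he1 hβ hcge j
  have ht0 : (0:ℝ) < Real.exp (-(4*e^4)) := Real.exp_pos _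
  have ht1 : Real.exp (-(4*e^4)) ≤ 1 := by
    rw [show (1:ℝ) = Real.exp 0 from Real.exp_zero.symm]
    apply Real.exp_le_exp.mpr
    nlinarith [pow_pos he0 4]
  have hQ0 : (0:ℝ) ≤ 1 - e/4 := by linarith
  have e1 : (2:ℝ)^(β*(n:ℝ)) = ((2:ℝ)^β)^n := by
    rw [Real.rpow_mul (by norm_num : (0:ℝ) ≤ 2), Real.rpow_natCast]
  have e2 : Real.exp (-(c * n * ((1+e^2)^j)^2)) = (Real.exp (-(c * ((1+e^2)^j)^2)))^n := by
    rw [← Real.exp_nat_mul]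
    congr 1
    ring
  calc (2:ℝ)^(β*(n:ℝ)) * ((1+e^2)^(j+1))^n * Real.exp (-(c * n * ((1+e^2)^j)^2))
      = ((2:ℝ)^β * (1+e^2)^(j+1) * Real.exp (-(c * ((1+e^2)^j)^2)))^n := by
        rw [e1, e2, mul_pow, mul_pow]
    _ ≤ ((1 - e/4) * (Real.exp (-(4*e^4)))^j)^n :=
        pow_le_pow_left₀ (by positivity) hbase n
    _ = (1 - e/4)^n * ((Real.exp (-(4*e^4)))^j)^n := mul_pow _ _ _
    _ ≤ (1 - e/4)^n * (Real.exp (-(4*e^4)))^j := by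
        apply mul_le_mul_of_nonneg_left _ (pow_nonneg hQ0 n)
        calc ((Real.exp (-(4*e^4)))^j)^n ≤ ((Real.exp (-(4*e^4)))^j)^1 :=
              pow_le_pow_of_le_one (by positivity) (pow_le_one₀ ht0.le ht1) hn1
          _ = (Real.exp (-(4*e^4)))^j := pow_one _

lemma gauss_sum_bound {n : ℕ} {L : Set (Euc n)} (lam r s : ℝ) (QT : ℕ → ℝ)
    (hfin : ∀ R : ℝ, Set.Finite {y | y ∈ dualLattice L ∧ ‖y‖ ≤ R})
    (hlamm : lam = lambda1 (dualLattice L)) (hlam0 : 0 < lam)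
    (hmin : ∀ y ∈ dualLattice L, y ≠ 0 → lam ≤ ‖y‖)
    (hr1 : 1 < r) (hs0 : 0 < s)
    (hQT : ∀ j : ℕ, (latticePointCount (r^(j+1)) (dualLattice L) : ℝ) *
        Real.exp (-(Real.pi * (r^j * lam)^2 * s^2)) ≤ QT j)
    (hQT0 : ∀ j, 0 ≤ QT j) (hsum : Summable QT) :
    gaussMass (1/s) (dualLattice L) 0 ≤ 1 + ∑' j : ℕ, QT j := by
  classical
  set g : Euc n → ℝ := fun y => Real.exp (-(Real.pi * ‖y‖^2 * s^2)) with hg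
  set f : Euc n → ℝ≥0∞ := fun y => ENNReal.ofReal (g y) with hf
  set Sh : ℕ → Set (Euc n) :=
    fun j => {y | y ∈ dualLattice L ∧ r^j * lam ≤ ‖y‖ ∧ ‖y‖ < r^(j+1) * lam} with hSh
  have hrpow1 : ∀ j : ℕ, (1:ℝ) ≤ r^j := fun j => one_le_pow₀ hr1.le
  have hShFin : ∀ j, (Sh j).Finite := by
    intro j
    refine (hfin (r^(j+1) * lam)).subset ?_
    rintro y ⟨h1, _, h3⟩
    exact ⟨h1, h3.le⟩
  have hShSub : ∀ j, Sh j ⊆ {y | y ∈ dualLattice L ∧ y ≠ 0 ∧ ‖y‖ ≤ r^(j+1) * lam} := by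
    intro j y hy
    obtain ⟨h1, h2, h3⟩ := hy
    have hypos : (0:ℝ) < ‖y‖ :=
      lt_of_lt_of_le (by positivity) h2
    exact ⟨h1, norm_pos_iff.mp hypos, h3.le⟩
  have hcard : ∀ j : ℕ, ((Sh j).ncard : ℝ) ≤ (latticePointCount (r^(j+1)) (dualLattice L) : ℝ) := by
    intro j
    have hbig : {y | y ∈ dualLattice L ∧ y ≠ 0 ∧ ‖y‖ ≤ r^(j+1) * lam}.Finite := by
      refine (hfin (r^(j+1) * lam)).subset ?_
      rintro y ⟨h1, _, h3⟩
      exact ⟨h1, h3⟩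
    have h1 : (Sh j).ncard ≤ latticePointCount (r^(j+1)) (dualLattice L) := by
      have hLPC : latticePointCount (r^(j+1)) (dualLattice L)
          = Set.ncard {y | y ∈ dualLattice L ∧ y ≠ 0 ∧ ‖y‖ ≤ r^(j+1) * lambda1 (dualLattice L)} := rfl
      rw [hLPC, ← hlamm]
      exact Set.ncard_le_ncard (hShSub j) hbig
    exact_mod_cast h1
  have hcover : ∀ y, y ∈ dualLattice L → y ≠ 0 → ∃ j : ℕ, y ∈ Sh j := by
    intro y hy hy0
    have h1 : lam ≤ ‖y‖ := hmin y hy hy0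
    have h2 : 1 ≤ ‖y‖ / lam := (one_le_div hlam0).mpr h1
    obtain ⟨j, hj1, hj2⟩ := exists_nat_pow_near h2 hr1
    refine ⟨j, hy, ?_, ?_⟩
    · rw [le_div_iff₀ hlam0] at hj1; exact hj1
    · rw [div_lt_iff₀ hlam0] at hj2; exact hj2
  have hpt : ∀ y : Euc n, Set.indicator (dualLattice L) f y ≤
      Set.indicator {0} f y + ∑' j : ℕ, Set.indicator (Sh j) f y := by
    intro y
    by_cases hy : y ∈ dualLattice L
    · rw [Set.indicator_of_mem hy]
      by_cases hy0 : y = 0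
      · subst hy0
        rw [Set.indicator_of_mem (Set.mem_singleton 0)]
        exact le_self_add
      · obtain ⟨j, hj⟩ := hcover y hy hy0
        calc f y = Set.indicator (Sh j) f y := (Set.indicator_of_mem hj f).symm
          _ ≤ ∑' j : ℕ, Set.indicator (Sh j) f y := ENNReal.le_tsum j
          _ ≤ _ := le_add_self
    · rw [Set.indicator_of_notMem hy]
      exact zero_le
  have hssum : ∀ j : ℕ, ∑' (y : (Sh j)), f ↑y ≤ ENNReal.ofReal (QT j) := by
    intro j
    have hfj := hShFin j
    rw [tsum_subtype]
    rw [tsum_eq_sum (s := hfj.toFinset)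
      (fun y hy => Set.indicator_of_notMem (by simpa using hy) f)]
    have hbd : ∀ y ∈ hfj.toFinset,
        Set.indicator (Sh j) f y
          ≤ ENNReal.ofReal (Real.exp (-(Real.pi * (r^j * lam)^2 * s^2))) := by
      intro y hy
      rw [Set.Finite.mem_toFinset] at hy
      rw [Set.indicator_of_mem hy]
      apply ENNReal.ofReal_le_ofReal
      simp only [hg]
      apply Real.exp_le_exp.mpr
      have h1 : r^j * lam ≤ ‖y‖ := hy.2.1
      have h2 : (r^j*lam)^2 ≤ ‖y‖^2 := pow_le_pow_left₀ (by positivity) h1 2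
      have h3 := mul_le_mul_of_nonneg_right
        (mul_le_mul_of_nonneg_left h2 Real.pi_pos.le) (sq_nonneg s)
      linarith
    calc ∑ y ∈ hfj.toFinset, Set.indicator (Sh j) f y
        ≤ hfj.toFinset.card •
            ENNReal.ofReal (Real.exp (-(Real.pi * (r^j * lam)^2 * s^2))) :=
          Finset.sum_le_card_nsmul _ _ _ hbd
      _ = (hfj.toFinset.card : ℝ≥0∞) *
            ENNReal.ofReal (Real.exp (-(Real.pi * (r^j * lam)^2 * s^2))) := by
          rw [nsmul_eq_mul]
      _ ≤ ENNReal.ofReal ((latticePointCount (r^(j+1)) (dualLattice L) : ℝ)) *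
            ENNReal.ofReal (Real.exp (-(Real.pi * (r^j * lam)^2 * s^2))) := by
          apply mul_le_mul_left
          rw [← ENNReal.ofReal_natCast]
          apply ENNReal.ofReal_le_ofReal
          rw [← Set.ncard_eq_toFinset_card (Sh j) hfj]
          exact hcard j
      _ = ENNReal.ofReal ((latticePointCount (r^(j+1)) (dualLattice L) : ℝ) *
            Real.exp (-(Real.pi * (r^j * lam)^2 * s^2))) := by
          rw [← ENNReal.ofReal_mul (by positivity)]
      _ ≤ ENNReal.ofReal (QT j) := ENNReal.ofReal_le_ofReal (hQT j)
  have hgeo : ∑' j : ℕ, ENNReal.ofReal (QT j) = ENNReal.ofReal (∑' j : ℕ, QT j) :=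
    (ENNReal.ofReal_tsum_of_nonneg hQT0 hsum).symm
  have htot : ∑' (y : (dualLattice L)), f ↑y ≤ ENNReal.ofReal (1 + ∑' j : ℕ, QT j) := by
    calc ∑' (y : (dualLattice L)), f ↑y = ∑' y, Set.indicator (dualLattice L) f y :=
          tsum_subtype _ f
      _ ≤ ∑' y, (Set.indicator ({0} : Set (Euc n)) f y + ∑' j : ℕ, Set.indicator (Sh j) f y) :=
          ENNReal.tsum_le_tsum hpt
      _ = (∑' y, Set.indicator ({0} : Set (Euc n)) f y) +
            ∑' y, ∑' j : ℕ, Set.indicator (Sh j) f y := ENNReal.tsum_add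
      _ = f 0 + ∑' j : ℕ, ∑' y, Set.indicator (Sh j) f y := by
          rw [← tsum_subtype, tsum_singleton, ENNReal.tsum_comm]
      _ = f 0 + ∑' j : ℕ, ∑' (y : (Sh j)), f ↑y := by
          congr 1
          exact tsum_congr fun j => (tsum_subtype _ f).symm
      _ ≤ ENNReal.ofReal 1 + ENNReal.ofReal (∑' j : ℕ, QT j) := by
          apply add_le_add
          · apply le_of_eq
            have hf0 : f 0 = ENNReal.ofReal 1 := by simp [hf, hg]
            rw [hf0]
          · rw [← hgeo]
            exact ENNReal.tsum_le_tsum hssum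
      _ = ENNReal.ofReal (1 + ∑' j : ℕ, QT j) := by
          rw [← ENNReal.ofReal_add (by norm_num) (tsum_nonneg hQT0)]
  have hmass : gaussMass (1/s) (dualLattice L) 0
      = (∑' (y : (dualLattice L)), f ↑y).toReal := by
    unfold gaussMass
    rw [ENNReal.tsum_toReal_eq (fun _ => ENNReal.ofReal_ne_top)]
    apply tsum_congr
    intro y
    simp only [hf, hg]
    rw [ENNReal.toReal_ofReal (Real.exp_nonneg _)]
    congr 1
    rw [sub_zero]
    field_simp
  rw [hmass]
  calc (∑' (y : (dualLattice L)), f ↑y).toReal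
      ≤ (ENNReal.ofReal (1 + ∑' j : ℕ, QT j)).toReal :=
        ENNReal.toReal_mono ENNReal.ofReal_ne_top htot
    _ = 1 + ∑' j : ℕ, QT j := ENNReal.toReal_ofReal (add_nonneg zero_le_one (tsum_nonneg hQT0))

end Aux

theorem dual_gaussMass_lt_three_halves_asymptotic :
    ∀ ε > (0 : ℝ), ∃ N : ℕ, ∀ n ≥ N, ∀ L : Set (Euc n), IsLattice L →
      ∀ β : ℝ, 0 ≤ β →
      (∀ α : ℝ, 1 ≤ α →
        (latticePointCount α (dualLattice L) : ℝ) ≤ (2 : ℝ) ^ (β * n) * α ^ n) →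
      ∀ s : ℝ,
        s ≥ ((2 : ℝ) ^ β / Real.sqrt (2 * Real.pi * Real.exp 1) + ε) *
              Real.sqrt n / lambda1 (dualLattice L) →
        gaussMass (1 / s) (dualLattice L) 0 < 3 / 2 := by
  intro ε hε
  set e : ℝ := min ε 1 with he
  have he0 : 0 < e := lt_min hε one_pos
  have he1 : e ≤ 1 := min_le_right _ _
  have heε : e ≤ ε := min_le_left _ _
  have hQ0 : (0:ℝ) ≤ 1 - e/4 := by linarith
  have hQ1 : (1:ℝ) - e/4 < 1 := by linarith
  have ht0 : (0:ℝ) < Real.exp (-(4*e^4)) := Real.exp_pos _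
  have ht1 : Real.exp (-(4*e^4)) < 1 := by
    rw [show (1:ℝ) = Real.exp 0 from Real.exp_zero.symm]
    apply Real.exp_lt_exp.mpr
    nlinarith [pow_pos he0 4]
  have h1t : (0:ℝ) < 1 - Real.exp (-(4*e^4)) := by linarith
  obtain ⟨N₀, hN₀⟩ := exists_pow_lt_of_lt_one (half_pos h1t) hQ1
  refine ⟨max N₀ 1, ?_⟩
  intro n hn L hL β hβ hcount s hs
  have hn1 : 1 ≤ n := le_trans (le_max_right _ _) hn
  have hnN₀ : N₀ ≤ n := le_trans (le_max_left _ _) hn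
  have hn0 : 0 < n := hn1
  have hnR : (0:ℝ) < (n:ℝ) := by exact_mod_cast hn0
  obtain ⟨hfin, m, hmD, hm0, hlamm, hmmin⟩ := dual_facts hn0 hL
  set lam : ℝ := lambda1 (dualLattice L) with hlam
  have hlam0 : 0 < lam := by rw [hlamm]; exact norm_pos_iff.mpr hm0
  have hmin : ∀ y ∈ dualLattice L, y ≠ 0 → lam ≤ ‖y‖ := by
    intro y hy hy0
    rw [hlamm]
    exact hmmin y hy hy0
  set w : ℝ := Real.sqrt (2*Real.pi*Real.exp 1) with hw
  have hw0 : 0 < w := Real.sqrt_pos.mpr (by positivity)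
  have h2b0 : (0:ℝ) < (2:ℝ)^β := Real.rpow_pos_of_pos (by norm_num) β
  set B : ℝ := (2:ℝ)^β / w with hB
  have hB0 : 0 < B := div_pos h2b0 hw0
  have hsn : (0:ℝ) < Real.sqrt n := Real.sqrt_pos.mpr hnR
  have hs' : (B + e) * Real.sqrt n / lam ≤ s := by
    refine le_trans ?_ hs
    have hnum : (B + e) * Real.sqrt n ≤ (B + ε) * Real.sqrt n :=
      mul_le_mul_of_nonneg_right (by linarith) hsn.le
    calc (B + e) * Real.sqrt n / lam = ((B + e) * Real.sqrt n) * lam⁻¹ := div_eq_mul_inv _ _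
      _ ≤ ((B + ε) * Real.sqrt n) * lam⁻¹ :=
          mul_le_mul_of_nonneg_right hnum (inv_nonneg.mpr hlam0.le)
      _ = (B + ε) * Real.sqrt n / lam := (div_eq_mul_inv _ _).symm
  have hs2 : (B + e) * Real.sqrt n ≤ s * lam := by
    rw [div_le_iff₀ hlam0] at hs'
    exact hs'
  have hApos : (0:ℝ) < B + e := by positivity
  have hs0 : 0 < s := by
    have h1 : (0:ℝ) < s * lam := lt_of_lt_of_le (by positivity) hs2
    by_contra hc
    push_neg at hc
    nlinarith
  set c : ℝ := Real.pi * s^2 * lam^2 / n with hc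
  have hcn : c * n = Real.pi * s^2 * lam^2 := by
    rw [hc]; field_simp
  have hcge : Real.pi * (B + e)^2 ≤ c := by
    have hsq : ((B+e) * Real.sqrt n)^2 ≤ (s*lam)^2 :=
      pow_le_pow_left₀ (by positivity) hs2 2
    have hsqn : (Real.sqrt n)^2 = n := Real.sq_sqrt hnR.le
    have hsq' : (B+e)^2 * (n:ℝ) ≤ s^2 * lam^2 := by
      calc (B+e)^2 * (n:ℝ) = ((B+e) * Real.sqrt n)^2 := by rw [mul_pow, hsqn]
        _ ≤ (s*lam)^2 := hsq
        _ = s^2 * lam^2 := mul_pow s lam 2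
    rw [hc, le_div_iff₀ hnR]
    nlinarith [mul_le_mul_of_nonneg_left hsq' Real.pi_pos.le]
  set QT : ℕ → ℝ := fun j => (1 - e/4)^n * (Real.exp (-(4*e^4)))^j with hQT
  have hQT0 : ∀ j, 0 ≤ QT j := fun j => by positivity
  have hsum : Summable QT := (summable_geometric_of_lt_one ht0.le ht1).mul_left _
  have hr1 : (1:ℝ) < 1 + e^2 := by nlinarith
  have hQTle : ∀ j : ℕ, (latticePointCount ((1+e^2)^(j+1)) (dualLattice L) : ℝ) *
      Real.exp (-(Real.pi * ((1+e^2)^j * lam)^2 * s^2)) ≤ QT j := by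
    intro j
    have h1 := hcount ((1+e^2)^(j+1)) (one_le_pow₀ hr1.le)
    have h2 := shell_coef_pow e β c n hn1 he0 he1 hβ (by rw [← hw, ← hB]; exact hcge) j
    have hexp : Real.exp (-(Real.pi * ((1+e^2)^j * lam)^2 * s^2))
        = Real.exp (-(c * n * ((1+e^2)^j)^2)) := by
      congr 1
      linear_combination (((1+e^2)^j)^2) * hcn
    calc (latticePointCount ((1+e^2)^(j+1)) (dualLattice L) : ℝ) *
          Real.exp (-(Real.pi * ((1+e^2)^j * lam)^2 * s^2))
        ≤ ((2:ℝ)^(β*n) * ((1+e^2)^(j+1))^n) *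
            Real.exp (-(Real.pi * ((1+e^2)^j * lam)^2 * s^2)) :=
          mul_le_mul_of_nonneg_right h1 (Real.exp_nonneg _)
      _ = (2:ℝ)^(β*n) * ((1+e^2)^(j+1))^n * Real.exp (-(c * n * ((1+e^2)^j)^2)) := by
          rw [hexp]
      _ ≤ QT j := h2
  have hmain := gauss_sum_bound lam (1+e^2) s QT hfin hlam hlam0 hmin hr1 hs0 hQTle hQT0 hsum
  have hgeosum : ∑' j : ℕ, QT j = (1-e/4)^n * (1 - Real.exp (-(4*e^4)))⁻¹ := by
    rw [hQT, tsum_mul_left, tsum_geometric_of_lt_one ht0.le ht1]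
  refine lt_of_le_of_lt hmain ?_
  rw [hgeosum]
  have h1 : (1-e/4)^n ≤ (1-e/4)^N₀ := pow_le_pow_of_le_one hQ0 hQ1.le hnN₀
  have h2 : (1-e/4)^n < (1 - Real.exp (-(4*e^4)))/2 := lt_of_le_of_lt h1 hN₀
  have h3 : (1-e/4)^n * (1 - Real.exp (-(4*e^4)))⁻¹ < 1/2 := by
    rw [← div_eq_mul_inv, div_lt_iff₀ h1t]
    linarith
  linarith
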